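/- The operator T' on V⊗V defined in the sign q-permutation representation satisfies (T')^2 = Id, where V is a Z_2-graded vector space over Q(q). -/

import Mathlib

/-! On `v_k ⊗ v_k` the operator `T'` acts by the sign `±1`. On the plane spanned by `v_k ⊗ v_l`
and `v_l ⊗ v_k` (`k < l`) it acts by the matrix `[[c, t], [t, -c]]` with
`c = (q - q⁻¹)/(q + q⁻¹)` and `t = ±2/(q + q⁻¹)`, which is a reflection because
`(q - q⁻¹)² + 4 = (q + q⁻¹)²`, i.e. `c² + t² = 1`. -/

open RatFunc

/-- Degree of basis vector `v_k`, `k : Fin (m+n)` zero-based: `0` iff `k < m`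
(`v_k ∈ V₀`), `1` otherwise (`v_k ∈ V₁`). -/
def degMN (m n : ℕ) (k : Fin (m + n)) : ℕ := if (k : ℕ) < m then 0 else 1

/-- The sign `q`-permutation operator `T'` on `V ⊗ V` over `K = ℚ(q)` (with `q = X`), in
coordinates with respect to the basis `v_k ⊗ v_l` of `V ⊗ V`, where `V = V₀ ⊕ V₁` has
homogeneous basis `v_1, …, v_{m+n}`:
`T'(v_k ⊗ v_k) = (-1)^{|v_k|} v_k ⊗ v_k`, and for `k ≠ l`,
`T'(v_k ⊗ v_l) = (2(-1)^{|v_k||v_l|}/(q+q⁻¹)) v_l ⊗ v_k ± ((q-q⁻¹)/(q+q⁻¹)) v_k ⊗ v_l`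
with sign `+` if `k < l` and `−` if `k > l`. -/
noncomputable def TprimeMN (m n : ℕ) :
    ((Fin (m + n) × Fin (m + n)) → RatFunc ℚ) → ((Fin (m + n) × Fin (m + n)) → RatFunc ℚ) :=
  fun f p =>
    if p.1 = p.2 then ((-1 : RatFunc ℚ) ^ degMN m n p.1) * f p
    else
      (if (p.1 : ℕ) < (p.2 : ℕ) then (X - X⁻¹) / (X + X⁻¹) else -((X - X⁻¹) / (X + X⁻¹)))
          * f p
        + (2 * (-1 : RatFunc ℚ) ^ (degMN m n p.1 * degMN m n p.2) / (X + X⁻¹)) * f (p.2, p.1)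

theorem sq_add_sq_div_add_inv {F : Type*} [Field F] {x e : F} (hx : x ≠ 0)
    (hx' : x + x⁻¹ ≠ 0) (he : e ^ 2 = 1) :
    ((x - x⁻¹) / (x + x⁻¹)) ^ 2 + (2 * e / (x + x⁻¹)) ^ 2 = 1 := by
  rw [div_pow, div_pow, ← add_div, div_eq_one_iff_eq (pow_ne_zero 2 hx'), mul_pow, he]
  linear_combination (-4 : F) * mul_inv_cancel₀ hx

theorem reflection_apply_apply {R : Type*} [CommRing R] {c c' t : R} (h : c ^ 2 + t ^ 2 = 1)
    (hc' : c' = -c) (a b : R) : c * (c * a + t * b) + t * (c' * b + t * a) = a := by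
  subst hc'
  linear_combination a * h

theorem RatFunc.X_add_X_inv_ne_zero (K : Type*) [Field K] : (X + X⁻¹ : RatFunc K) ≠ 0 := by
  have hX2 : (X ^ 2 + 1 : RatFunc K) ≠ 0 := by
    have := (Polynomial.monic_X_pow_add_C (1 : K) two_ne_zero).ne_zero
    simpa using (algebraMap_ne_zero this : algebraMap _ (RatFunc K) _ ≠ 0)
  contrapose! hX2
  calc (X ^ 2 + 1 : RatFunc K) = X * (X + X⁻¹) := by
        rw [mul_add, mul_inv_cancel₀ X_ne_zero]; ring
    _ = 0 := by rw [hX2, mul_zero]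

theorem TprimeMN_coeff_sq_add_sq (j : ℕ) :
    ((X - X⁻¹) / (X + X⁻¹)) ^ 2 + (2 * (-1 : RatFunc ℚ) ^ j / (X + X⁻¹)) ^ 2 = 1 :=
  sq_add_sq_div_add_inv X_ne_zero (X_add_X_inv_ne_zero ℚ)
    (by rw [pow_right_comm, neg_one_sq, one_pow])

/-- The operator `T'` of the sign `q`-permutation representation satisfies `(T')² = Id`
on `V ⊗ V`, for `V` a `ℤ₂`-graded vector space over `ℚ(q)`. -/
theorem stmt_17 (m n : ℕ) :
    ∀ f : (Fin (m + n) × Fin (m + n)) → RatFunc ℚ,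
      TprimeMN m n (TprimeMN m n f) = f := by
  intro f
  funext ⟨k, l⟩
  rcases eq_or_ne k l with rfl | hkl
  · simp only [TprimeMN, ↓reduceIte]
    rw [← mul_assoc, ← pow_add, (Even.add_self _).neg_one_pow, one_mul]
  have hlk : l ≠ k := hkl.symm
  have hsymm : degMN m n l * degMN m n k = degMN m n k * degMN m n l := mul_comm _ _
  have hcoeff := TprimeMN_coeff_sq_add_sq (degMN m n k * degMN m n l)
  rcases Fin.lt_or_lt_of_ne hkl with hlt | hgt
  · have hnlt : ¬ (l : ℕ) < k := by omega
    simp only [TprimeMN, if_neg hkl, if_neg hlk, if_pos (Fin.lt_def.mp hlt), if_neg hnlt, hsymm]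
    exact reflection_apply_apply hcoeff rfl _ _
  · have hnlt : ¬ (k : ℕ) < l := by omega
    simp only [TprimeMN, if_neg hkl, if_neg hlk, if_pos (Fin.lt_def.mp hgt), if_neg hnlt, hsymm]
    exact reflection_apply_apply (by rwa [neg_sq]) (neg_neg _).symm _ _
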